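/- For m, n ≥ 1 and 0 ≤ r ≤ m + n − 1: ∑_{k=1}^{n} (-1)^{k-1} [n choose k]_q q^{k(k-1)/2 + k(m−r)} / (1−q^k)^m = ∑_{j=0}^{m} C(r, m−j) · ∑_{k=1}^{n} (-1)^{k-1} [n choose k]_q q^{k(k-1)/2 + kj} / (1−q^k)^j, as rational functions in q. -/

import Mathlib

/-!
Put `u_k = q^k / (1 - q^k)`. Since `q^{-k} = 1 + u_k⁻¹`, the `k`-th summand on the left is
`c_k u_k^m (1 + u_k⁻¹)^r` with `c_k = (-1)^{k-1} [n choose k]_q q^{k(k-1)/2}`, so the binomial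
theorem turns the left side into `∑_s C(r,s) S(m - s)`, where `S(e) = ∑_k c_k u_k^e`. The right side
is the part `s ≤ m` of that sum. The remaining terms have `S(-l)` with `1 ≤ l < n`, and these
vanish: `u_k⁻¹ = q^{-k} - 1`, so `u_k^{-l}` is a polynomial of degree `l < n` in `q^{-k}`, while by the
q-binomial theorem `∑_{k=0}^n (-1)^k [n choose k]_q q^{k(k-1)/2} q^{-dk} = (q^{-d}; q)_n`,
which is `0` for `d < n`.
-/

/-- The q-Pochhammer symbol `(a;q)_n = ∏_{j=0}^{n-1} (1 - a q^j)`. -/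
noncomputable def qPoch (a q : ℂ) (n : ℕ) : ℂ := ∏ j ∈ Finset.range n, (1 - a * q ^ j)

/-- The Gaussian binomial coefficient `[n choose k]_q`. -/
noncomputable def qBinom (q : ℂ) (n k : ℕ) : ℂ :=
  qPoch q q n / (qPoch q q k * qPoch q q (n - k))

open Finset Polynomial

variable {q : ℂ}

lemma qPoch_zero (a : ℂ) : qPoch a q 0 = 1 := prod_range_zero _

lemma qPoch_succ (a : ℂ) (n : ℕ) : qPoch a q (n + 1) = qPoch a q n * (1 - a * q ^ n) :=
  prod_range_succ _ _

lemma one_sub_mul_pow_ne_zero (hq1 : ∀ j, 1 ≤ j → q ^ j ≠ 1) (j : ℕ) : 1 - q * q ^ j ≠ 0 := by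
  rw [← pow_succ']
  exact sub_ne_zero.2 (hq1 (j + 1) j.succ_pos).symm

lemma qPoch_self_ne_zero (hq1 : ∀ j, 1 ≤ j → q ^ j ≠ 1) (n : ℕ) : qPoch q q n ≠ 0 :=
  prod_ne_zero_iff.2 fun j _ => one_sub_mul_pow_ne_zero hq1 j

lemma qBinom_zero_right (hq1 : ∀ j, 1 ≤ j → q ^ j ≠ 1) (n : ℕ) : qBinom q n 0 = 1 := by
  rw [qBinom, qPoch_zero, one_mul, Nat.sub_zero, div_self (qPoch_self_ne_zero hq1 n)]

lemma qBinom_self (hq1 : ∀ j, 1 ≤ j → q ^ j ≠ 1) (n : ℕ) : qBinom q n n = 1 := by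
  rw [qBinom, Nat.sub_self, qPoch_zero, mul_one, div_self (qPoch_self_ne_zero hq1 n)]

lemma qBinom_succ_succ (hq1 : ∀ j, 1 ≤ j → q ^ j ≠ 1) {n k : ℕ} (hk : k < n) :
    qBinom q (n + 1) (k + 1) = qBinom q n (k + 1) + q ^ (n - k) * qBinom q n k := by
  obtain ⟨d, rfl⟩ := Nat.exists_eq_add_of_lt hk
  simp only [qBinom, show k + d + 1 - k = d + 1 by omega,
    show k + d + 1 + 1 - (k + 1) = d + 1 by omega,
    show k + d + 1 - (k + 1) = d by omega, qPoch_succ, pow_succ]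
  have := qPoch_self_ne_zero hq1 (k + d)
  have := qPoch_self_ne_zero hq1 k
  have := qPoch_self_ne_zero hq1 d
  have := one_sub_mul_pow_ne_zero hq1 (k + d)
  have := one_sub_mul_pow_ne_zero hq1 k
  have := one_sub_mul_pow_ne_zero hq1 d
  field_simp
  ring

theorem sum_qBinom_mul_pow_eq_qPoch (hq1 : ∀ j, 1 ≤ j → q ^ j ≠ 1) (x : ℂ) (n : ℕ) :
    ∑ k ∈ range (n + 1), (-1) ^ k * qBinom q n k * q ^ k.choose 2 * x ^ k = qPoch x q n := by
  have choose_succ_two (k : ℕ) : (k + 1).choose 2 = k.choose 2 + k := by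
    rw [Nat.choose_succ_succ, Nat.choose_one_right, add_comm]
  induction n with
  | zero => simp [qPoch_zero, qBinom_self hq1]
  | succ n ih =>
    have pascal : ∀ k ∈ range n,
        (-1) ^ (k + 1) * qBinom q (n + 1) (k + 1) * q ^ (k + 1).choose 2 * x ^ (k + 1) =
          (-1) ^ (k + 1) * qBinom q n (k + 1) * q ^ (k + 1).choose 2 * x ^ (k + 1) -
            x * q ^ n * ((-1) ^ k * qBinom q n k * q ^ k.choose 2 * x ^ k) := by
      intro k hk
      have hqn : q ^ n = q ^ (n - k) * q ^ k := by
        rw [← pow_add, Nat.sub_add_cancel (mem_range.1 hk).le]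
      rw [qBinom_succ_succ hq1 (mem_range.1 hk), hqn, choose_succ_two, pow_add]
      ring
    have split_first :=
      sum_range_succ' (fun k => (-1) ^ k * qBinom q n k * q ^ k.choose 2 * x ^ k) n
    have split_last :=
      sum_range_succ (fun k => (-1) ^ k * qBinom q n k * q ^ k.choose 2 * x ^ k) n
    rw [sum_range_succ', sum_range_succ, sum_congr rfl pascal, sum_sub_distrib, ← mul_sum,
      qPoch_succ, ← ih]
    simp only [qBinom_zero_right hq1, qBinom_self hq1, choose_succ_two] at split_first split_last ⊢
    linear_combination x * q ^ n * split_last - split_first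

lemma qPoch_inv_pow_eq_zero (hq : q ≠ 0) {d n : ℕ} (hd : d < n) : qPoch (q ^ d)⁻¹ q n = 0 :=
  prod_eq_zero (mem_range.2 hd) (by rw [inv_mul_cancel₀ (pow_ne_zero d hq), sub_self])

theorem sum_qBinom_mul_eval_inv_pow_eq_zero (hq : q ≠ 0) (hq1 : ∀ j, 1 ≤ j → q ^ j ≠ 1) {n : ℕ}
    {p : ℂ[X]} (hp : p.natDegree < n) :
    ∑ k ∈ range (n + 1), (-1) ^ k * qBinom q n k * q ^ k.choose 2 * p.eval (q ^ k)⁻¹ = 0 := by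
  simp_rw [eval_eq_sum_range' hp, mul_sum]
  rw [sum_comm]
  refine sum_eq_zero fun d hd => ?_
  calc _ = p.coeff d * qPoch (q ^ d)⁻¹ q n := by
        rw [← sum_qBinom_mul_pow_eq_qPoch hq1, mul_sum]
        refine sum_congr rfl fun k _ => ?_
        rw [← inv_pow, ← inv_pow, ← pow_mul, ← pow_mul, mul_comm d k]
        ring
    _ = 0 := by rw [qPoch_inv_pow_eq_zero hq (mem_range.1 hd), mul_zero]

/-- `S(e)` in the notation above. -/
noncomputable def altQBinomSum (q : ℂ) (n : ℕ) (e : ℤ) : ℂ :=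
  ∑ k ∈ Icc 1 n, (-1) ^ (k - 1) * qBinom q n k * q ^ k.choose 2 * (q ^ k / (1 - q ^ k)) ^ e

lemma altQBinomSum_natCast (q : ℂ) (n j : ℕ) :
    altQBinomSum q n j =
      ∑ k ∈ Icc 1 n, (-1) ^ (k - 1) * qBinom q n k * q ^ (k * (k - 1) / 2 + k * j) /
        (1 - q ^ k) ^ j := by
  refine sum_congr rfl fun k _ => ?_
  rw [zpow_natCast, div_pow, ← pow_mul, pow_add, ← Nat.choose_two_right]
  ring

lemma altQBinomSum_neg_eq_zero (hq : q ≠ 0) (hq1 : ∀ j, 1 ≤ j → q ^ j ≠ 1) {n l : ℕ}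
    (hl : 1 ≤ l) (hln : l < n) : altQBinomSum q n (-l) = 0 := by
  have hdeg : ((X - C 1) ^ l : ℂ[X]).natDegree < n :=
    (natDegree_pow_le_of_le l (natDegree_X_sub_C_le 1)).trans_lt (by omega)
  have h := sum_qBinom_mul_eval_inv_pow_eq_zero hq hq1 hdeg
  rw [sum_range_eq_add_Ico _ (by omega : 0 < n + 1), Ico_add_one_right_eq_Icc] at h
  simp only [eval_pow, eval_sub, eval_X, eval_C, pow_zero, inv_one, sub_self,
    zero_pow (by omega : l ≠ 0), mul_zero, zero_add] at h
  rw [altQBinomSum, ← neg_eq_zero, ← sum_neg_distrib, ← h]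
  refine sum_congr rfl fun k hk => ?_
  obtain ⟨k, rfl⟩ := Nat.exists_eq_add_of_le' (mem_Icc.1 hk).1
  have hqk : q ^ (k + 1) ≠ 0 := pow_ne_zero _ hq
  rw [zpow_neg, zpow_natCast, ← inv_pow, inv_div, sub_div, div_self hqk, one_div]
  simp only [Nat.add_sub_cancel, pow_succ]
  ring

lemma zpow_sub_div_one_sub_pow_eq_sum {x : ℂ} (hx : x ≠ 0) (hx1 : 1 - x ≠ 0) (m r : ℕ) :
    x ^ ((m : ℤ) - r) / (1 - x) ^ m =
      ∑ s ∈ range (r + 1), (r.choose s : ℂ) * (x / (1 - x)) ^ ((m : ℤ) - s) := by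
  have hu : x / (1 - x) ≠ 0 := div_ne_zero hx hx1
  have hinv : x⁻¹ = (x / (1 - x))⁻¹ + 1 := by field_simp; ring
  calc x ^ ((m : ℤ) - r) / (1 - x) ^ m = (x / (1 - x)) ^ m * ((x / (1 - x))⁻¹ + 1) ^ r := by
        rw [← hinv, zpow_sub₀ hx, zpow_natCast, zpow_natCast, div_pow, inv_pow]
        ring
    _ = _ := by
        rw [add_pow, mul_sum]
        refine sum_congr rfl fun s _ => ?_
        rw [zpow_sub₀ hu, zpow_natCast, zpow_natCast, inv_pow, one_pow]
        ring

lemma sum_Icc_eq_sum_choose_mul_altQBinomSum (hq : q ≠ 0) (hq1 : ∀ j, 1 ≤ j → q ^ j ≠ 1)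
    (m n r : ℕ) :
    ∑ k ∈ Icc 1 n, (-1 : ℂ) ^ (k - 1) * qBinom q n k *
        q ^ (((k * (k - 1) / 2 : ℕ) : ℤ) + (k : ℤ) * ((m : ℤ) - r)) / (1 - q ^ k) ^ m =
      ∑ s ∈ range (r + 1), (r.choose s : ℂ) * altQBinomSum q n (m - s) := by
  simp_rw [altQBinomSum, mul_sum]
  rw [sum_comm]
  refine sum_congr rfl fun k hk => ?_
  have hqk : q ^ k ≠ 0 := pow_ne_zero k hq
  have hqk1 : 1 - q ^ k ≠ 0 := sub_ne_zero.2 (hq1 k (mem_Icc.1 hk).1).symm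
  calc _ = (-1) ^ (k - 1) * qBinom q n k * q ^ k.choose 2 *
        ((q ^ k) ^ ((m : ℤ) - r) / (1 - q ^ k) ^ m) := by
        rw [zpow_add₀ hq, zpow_natCast, zpow_mul, zpow_natCast, ← Nat.choose_two_right]
        ring
    _ = _ := by
        rw [zpow_sub_div_one_sub_pow_eq_sum hqk hqk1, mul_sum]
        refine sum_congr rfl fun s _ => ?_
        ring

lemma sum_choose_mul_altQBinomSum_eq (hq : q ≠ 0) (hq1 : ∀ j, 1 ≤ j → q ^ j ≠ 1)
    {m n r : ℕ} (hr : r ≤ m + n - 1) :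
    ∑ s ∈ range (r + 1), (r.choose s : ℂ) * altQBinomSum q n (m - s) =
      ∑ s ∈ range (m + 1), (r.choose s : ℂ) * altQBinomSum q n (m - s) := by
  have hsub : ∀ {a}, a ≤ m + r → range (a + 1) ⊆ range (m + r + 1) :=
    fun h => range_subset_range.2 (by omega)
  have beyond_r : ∀ s ∈ range (m + r + 1), s ∉ range (r + 1) →
      (r.choose s : ℂ) * altQBinomSum q n (m - s) = 0 := fun s _ hs => by
    rw [Nat.choose_eq_zero_of_lt (by simpa using hs), Nat.cast_zero, zero_mul]
  have beyond_m : ∀ s ∈ range (m + r + 1), s ∉ range (m + 1) →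
      (r.choose s : ℂ) * altQBinomSum q n (m - s) = 0 := fun s _ hs => by
    rw [mem_range, not_lt] at hs
    obtain hsr | hsr := le_or_gt s r
    · rw [show (m : ℤ) - s = -((s - m : ℕ) : ℤ) by omega,
        altQBinomSum_neg_eq_zero hq hq1 (by omega) (by omega), mul_zero]
    · rw [Nat.choose_eq_zero_of_lt hsr, Nat.cast_zero, zero_mul]
  rw [sum_subset (hsub (by omega)) beyond_r, sum_subset (hsub (by omega)) beyond_m]

theorem stmt11_general (m n r : ℕ) (hr : r ≤ m + n - 1)
    (q : ℂ) (hq : q ≠ 0) (hq1 : ∀ j, 1 ≤ j → q ^ j ≠ 1) :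
    ∑ k ∈ Finset.Icc 1 n,
        (-1 : ℂ) ^ (k - 1) * qBinom q n k *
          q ^ (((k * (k - 1) / 2 : ℕ) : ℤ) + (k : ℤ) * ((m : ℤ) - r)) / (1 - q ^ k) ^ m
      = ∑ j ∈ Finset.range (m + 1), (r.choose (m - j) : ℂ) *
          ∑ k ∈ Finset.Icc 1 n,
            (-1 : ℂ) ^ (k - 1) * qBinom q n k *
              q ^ (k * (k - 1) / 2 + k * j) / (1 - q ^ k) ^ j := by
  rw [sum_Icc_eq_sum_choose_mul_altQBinomSum hq hq1, sum_choose_mul_altQBinomSum_eq hq hq1 hr,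
    ← sum_range_reflect]
  refine sum_congr rfl fun j hj => ?_
  have hjm : j ≤ m := Nat.lt_succ_iff.1 (mem_range.1 hj)
  rw [← altQBinomSum_natCast, Nat.add_sub_cancel, Nat.cast_sub hjm, sub_sub_cancel]

theorem stmt11 (m n r : ℕ) (hm : 1 ≤ m) (hn : 1 ≤ n) (hr : r ≤ m + n - 1)
    (q : ℂ) (hq : q ≠ 0) (hq1 : ∀ j, 1 ≤ j → q ^ j ≠ 1) :
    ∑ k ∈ Finset.Icc 1 n,
        (-1 : ℂ) ^ (k - 1) * qBinom q n k *
          q ^ (((k * (k - 1) / 2 : ℕ) : ℤ) + (k : ℤ) * ((m : ℤ) - r)) / (1 - q ^ k) ^ m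
      = ∑ j ∈ Finset.range (m + 1), (r.choose (m - j) : ℂ) *
          ∑ k ∈ Finset.Icc 1 n,
            (-1 : ℂ) ^ (k - 1) * qBinom q n k *
              q ^ (k * (k - 1) / 2 + k * j) / (1 - q ^ k) ^ j :=
  stmt11_general m n r hr q hq hq1
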